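/- (Osserman–Croke-type bound, simply connected case) Let Ω ⊆ ℝ² be a bounded simply connected domain. Assume the Cheeger-type inequality λ₁ₚ(Ω) ≥ (h₁(Ω)/p)^p where h₁(Ω) is the infimum of |∂Ω'|/|Ω'| over smooth simply connected compactly contained subdomains Ω', and assume Bonnesen's inequality in the form |∂Ω'|/|Ω'| ≥ 1/ρ̃_{Ω'} for such subdomains, where ρ̃_D = ρ_D/(1 + πρ_D²/|D|) is the reduced inradius. Then λ₁ₚ(Ω) ≥ (1/(p ρ̃_Ω))^p. -/

import Mathlib

open MeasureTheory Metric Set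

/-- First Dirichlet eigenvalue of the `p`-Laplacian on an open set `Ω ⊆ ℝ²`. -/
noncomputable def lambda1 (n : ℕ) (p : ℝ) (Ω : Set (EuclideanSpace ℝ (Fin n))) : ℝ :=
  sInf {R : ℝ | ∃ u : EuclideanSpace ℝ (Fin n) → ℝ, ContDiff ℝ (⊤ : ℕ∞) u ∧ HasCompactSupport u ∧
    tsupport u ⊆ Ω ∧ u ≠ 0 ∧
    R = (∫ x in Ω, ‖fderiv ℝ u x‖ ^ p) / (∫ x in Ω, |u x| ^ p)}

/-- Inradius of a set `Ω ⊆ ℝⁿ`. -/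
noncomputable def inradius (n : ℕ) (Ω : Set (EuclideanSpace ℝ (Fin n))) : ℝ :=
  sSup {r : ℝ | 0 < r ∧ ∃ c, Metric.ball c r ⊆ Ω}

/-- Reduced inradius of a planar set: `ρ̃_Ω = ρ_Ω / (1 + π ρ_Ω² / |Ω|)`. -/
noncomputable def redInradius (Ω : Set (EuclideanSpace ℝ (Fin 2))) : ℝ :=
  inradius 2 Ω / (1 + Real.pi * (inradius 2 Ω) ^ 2 / (volume Ω).toReal)


lemma vol_ball2 (c : EuclideanSpace ℝ (Fin 2)) (r : ℝ) (hr : 0 ≤ r) :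
    (volume (Metric.ball c r)).toReal = Real.pi * r ^ 2 := by
  rw [EuclideanSpace.volume_ball]
  simp only [Fintype.card_fin]
  rw [show ((2:ℕ):ℝ)/2 + 1 = 2 by norm_num, Real.Gamma_two, div_one,
    Real.sq_sqrt Real.pi_nonneg,
    ENNReal.toReal_mul, ENNReal.toReal_pow, ENNReal.toReal_ofReal hr,
    ENNReal.toReal_ofReal Real.pi_nonneg]
  ring

/-- every admissible radius satisfies `π r² ≤ |Ω|`. -/
lemma radius_bound {Ω : Set (EuclideanSpace ℝ (Fin 2))} (hvol : volume Ω ≠ ⊤)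
    {r : ℝ} (hr : 0 < r ∧ ∃ c, Metric.ball c r ⊆ Ω) :
    r ≤ Real.sqrt ((volume Ω).toReal / Real.pi) := by
  obtain ⟨hr0, c, hc⟩ := hr
  have h1 : Real.pi * r ^ 2 ≤ (volume Ω).toReal := by
    rw [← vol_ball2 c r hr0.le]
    exact ENNReal.toReal_mono hvol (measure_mono hc)
  have : r ^ 2 ≤ (volume Ω).toReal / Real.pi :=
    (le_div_iff₀' Real.pi_pos).2 h1
  calc r = Real.sqrt (r ^ 2) := (Real.sqrt_sq hr0.le).symm
    _ ≤ _ := Real.sqrt_le_sqrt this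

lemma bdd_radii {Ω : Set (EuclideanSpace ℝ (Fin 2))} (hvol : volume Ω ≠ ⊤) :
    BddAbove {r : ℝ | 0 < r ∧ ∃ c, Metric.ball c r ⊆ Ω} :=
  ⟨_, fun _ hr => radius_bound hvol hr⟩

lemma pi_inradius_sq_le {Ω : Set (EuclideanSpace ℝ (Fin 2))} (hvol : volume Ω ≠ ⊤)
    (hne : {r : ℝ | 0 < r ∧ ∃ c, Metric.ball c r ⊆ Ω}.Nonempty) :
    Real.pi * (inradius 2 Ω) ^ 2 ≤ (volume Ω).toReal := by
  have h : inradius 2 Ω ≤ Real.sqrt ((volume Ω).toReal / Real.pi) :=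
    csSup_le hne fun r hr => radius_bound hvol hr
  have h0 : 0 ≤ inradius 2 Ω := by
    obtain ⟨r, hr⟩ := hne
    exact le_trans hr.1.le (le_csSup (bdd_radii hvol) hr)
  have := pow_le_pow_left₀ h0 h 2
  rw [Real.sq_sqrt (by positivity)] at this
  calc Real.pi * inradius 2 Ω ^ 2 ≤ Real.pi * ((volume Ω).toReal / Real.pi) :=
        by nlinarith [Real.pi_pos]
    _ = (volume Ω).toReal := by field_simp

lemma red_mono_aux {ρ' ρ V' V : ℝ} (hρ'0 : 0 < ρ') (hρ : ρ' ≤ ρ) (hV'0 : 0 < V')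
    (hV : V' ≤ V) (hπ : Real.pi * ρ ^ 2 ≤ V) :
    ρ' / (1 + Real.pi * ρ' ^ 2 / V') ≤ ρ / (1 + Real.pi * ρ ^ 2 / V) := by
  have hπ0 := Real.pi_pos
  have hV0 : 0 < V := lt_of_lt_of_le hV'0 hV
  have hd' : 0 < 1 + Real.pi * ρ' ^ 2 / V' := by positivity
  have hd : 0 < 1 + Real.pi * ρ ^ 2 / V := by positivity
  rw [div_le_div_iff₀ hd' hd, ← mul_le_mul_iff_of_pos_right (show (0:ℝ) < V' * V by positivity)]
  have key : Real.pi * ρ' * ρ ≤ V := by nlinarith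
  have e1 : ρ' * (1 + Real.pi * ρ ^ 2 / V) * (V' * V) =
      ρ' * V' * V + Real.pi * ρ ^ 2 * ρ' * V' := by field_simp
  have e2 : ρ * (1 + Real.pi * ρ' ^ 2 / V') * (V' * V) =
      ρ * V' * V + Real.pi * ρ' ^ 2 * ρ * V := by field_simp
  rw [e1, e2]
  nlinarith [mul_nonneg (mul_nonneg (sub_nonneg.2 hρ) hV'0.le) (sub_nonneg.2 key),
    mul_nonneg (mul_nonneg (mul_nonneg hπ0.le (sq_nonneg ρ')) (le_trans hρ'0.le hρ))
      (sub_nonneg.2 hV)]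

/-- Osserman–Croke-type bound, simply connected case: let `Ω ⊆ ℝ²` be a bounded simply
connected domain and `F` the family of smooth simply connected compactly contained
subdomains.  Assuming the Cheeger inequality `λ₁ₚ(Ω) ≥ (h₁(Ω)/p)ᵖ` with
`h₁(Ω) = inf_{Ω' ∈ F} |∂Ω'|/|Ω'|`, and Bonnesen's inequality `|∂Ω'|/|Ω'| ≥ 1/ρ̃_{Ω'}` on
`F`, we get `λ₁ₚ(Ω) ≥ (1/(p ρ̃_Ω))ᵖ`. -/
theorem stmt18 (p : ℝ) (hp : 1 < p)
    (Ω : Set (EuclideanSpace ℝ (Fin 2))) (hΩ : IsOpen Ω) (hb : Bornology.IsBounded Ω)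
    (hconn : IsConnected Ω) (hsc : SimplyConnectedSpace Ω)
    (Per : Set (EuclideanSpace ℝ (Fin 2)) → ℝ) (F : Set (Set (EuclideanSpace ℝ (Fin 2))))
    (hF : ∀ Ω' ∈ F, IsOpen Ω' ∧ Ω'.Nonempty ∧ Ω' ⊆ Ω)
    (h₁ : ℝ) (hglb : IsGLB {q : ℝ | ∃ Ω' ∈ F, q = Per Ω' / (volume Ω').toReal} h₁)
    (hCheeger : (h₁ / p) ^ p ≤ lambda1 2 p Ω)
    (hBonnesen : ∀ Ω' ∈ F, 1 / redInradius Ω' ≤ Per Ω' / (volume Ω').toReal)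
    (hρ : 0 < inradius 2 Ω) :
    (1 / (p * redInradius Ω)) ^ p ≤ lambda1 2 p Ω := by
  have hp0 : (0:ℝ) < p := lt_trans one_pos hp
  have hvolΩ : volume Ω ≠ ⊤ := hb.measure_lt_top.ne
  have hVΩ : 0 < (volume Ω).toReal :=
    ENNReal.toReal_pos (hΩ.measure_pos volume hconn.nonempty).ne' hvolΩ
  have hSΩ : {r : ℝ | 0 < r ∧ ∃ c, Metric.ball c r ⊆ Ω}.Nonempty := by
    by_contra h
    rw [Set.not_nonempty_iff_eq_empty] at h
    rw [inradius, h, Real.sSup_empty] at hρ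
    exact lt_irrefl 0 hρ
  have hπΩ : Real.pi * (inradius 2 Ω) ^ 2 ≤ (volume Ω).toReal :=
    pi_inradius_sq_le hvolΩ hSΩ
  have hdΩ : 0 < 1 + Real.pi * (inradius 2 Ω) ^ 2 / (volume Ω).toReal := by positivity
  have hredΩ : 0 < redInradius Ω := div_pos hρ hdΩ
  have hlb : 1 / redInradius Ω ≤ h₁ := by
    apply hglb.2
    rintro q ⟨Ω', hΩ'F, rfl⟩
    obtain ⟨hO, hne, hsub⟩ := hF Ω' hΩ'F
    have hvol' : volume Ω' ≠ ⊤ := ((measure_mono hsub).trans_lt hb.measure_lt_top).ne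
    have hV' : 0 < (volume Ω').toReal :=
      ENNReal.toReal_pos (hO.measure_pos volume hne).ne' hvol'
    have hS' : {r : ℝ | 0 < r ∧ ∃ c, Metric.ball c r ⊆ Ω'}.Nonempty := by
      obtain ⟨x, hx⟩ := hne
      obtain ⟨r, hr, hball⟩ := Metric.isOpen_iff.1 hO x hx
      exact ⟨r, hr, x, hball⟩
    have hρ'0 : 0 < inradius 2 Ω' := by
      obtain ⟨r, hr⟩ := hS'
      exact lt_of_lt_of_le hr.1 (le_csSup (bdd_radii hvol') hr)
    have hρmono : inradius 2 Ω' ≤ inradius 2 Ω := by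
      apply csSup_le_csSup (bdd_radii hvolΩ) hS'
      rintro r ⟨hr0, c, hc⟩
      exact ⟨hr0, c, hc.trans hsub⟩
    have hVmono : (volume Ω').toReal ≤ (volume Ω).toReal :=
      ENNReal.toReal_mono hvolΩ (measure_mono hsub)
    have hred' : 0 < redInradius Ω' := div_pos hρ'0 (by positivity)
    have hmono : redInradius Ω' ≤ redInradius Ω :=
      red_mono_aux hρ'0 hρmono hV' hVmono hπΩ
    calc 1 / redInradius Ω ≤ 1 / redInradius Ω' :=
          one_div_le_one_div_of_le hred' hmono
      _ ≤ _ := hBonnesen Ω' hΩ'F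
  have hbase : 1 / (p * redInradius Ω) ≤ h₁ / p := by
    rw [show (1:ℝ) / (p * redInradius Ω) = (1 / redInradius Ω) / p by
      rw [div_div, mul_comm]]
    gcongr
  refine le_trans ?_ hCheeger
  exact Real.rpow_le_rpow (by positivity) hbase hp0.le
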